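/- arXiv:1502.01632 — 2 statements merged into one kernel-verified Lean document; each statement's English description precedes it below -/
import Mathlib

section
/- Let ν > 0 and let X be a Student's t random variable with ν degrees of freedom, i.e. P[X ≥ a] = C_ν ∫_a^∞ (1 + x²/ν)^{−(ν+1)/2} dx with C_ν = Γ((ν+1)/2)/(√(νπ) Γ(ν/2)). Then for every a with 0 ≤ a ≤ √(2(ν + 1.22)), one has P[X ≥ a] ≤ e^{−a²/4}. -/
open Real MeasureTheory Set

/-! The kernel `(1 + x²/ν)^(-s)` is a Gamma mixture of Gaussians,
`b^(-s) = Γ(s)⁻¹ ∫₀^∞ t^(s-1) e^(-bt) dt` with `b = 1 + x²/ν`. Bounding each Gaussian tail by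
`∫ₐ^∞ e^(-cx²) ≤ e^(-ca²) √(π/c)/2` (from `x² ≥ a² + (x-a)²`) and integrating the mixture back
gives `∫ₐ^∞ (1 + x²/ν)^(-s) ≤ √(πν)/2 · Γ(s-1/2)/Γ(s) · (1 + a²/ν)^(-(s-1/2))`. For
`s = (ν+1)/2` the normalising constant cancels, leaving the tail at most `(1 + a²/ν)^(-ν/2) / 2`,
and this is below `e^(-a²/4)` because `log (1 + u) ≥ min (u/2) 1`, while `log 2 > 0.61` absorbs
the slack `a² ≤ 2ν + 2.44`. -/

lemma lintegral_Ioi_rpow_mul_exp_neg_mul {p b : ℝ} (hp : 0 < p) (hb : 0 < b) :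
    ∫⁻ t in Ioi (0 : ℝ), ENNReal.ofReal (t ^ (p - 1) * exp (-(b * t))) =
      ENNReal.ofReal (b ^ (-p) * Gamma p) := by
  have hint : IntegrableOn (fun t : ℝ ↦ t ^ (p - 1) * exp (-(b * t))) (Ioi 0) := by
    simpa [rpow_one, neg_mul] using
      integrableOn_rpow_mul_exp_neg_mul_rpow (by linarith : -1 < p - 1) one_pos hb
  have hnonneg : 0 ≤ᵐ[volume.restrict (Ioi 0)] fun t : ℝ ↦ t ^ (p - 1) * exp (-(b * t)) :=
    ae_restrict_of_forall_mem measurableSet_Ioi fun t ht ↦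
      mul_nonneg (rpow_nonneg (le_of_lt ht) _) (exp_pos _).le
  rw [← ofReal_integral_eq_lintegral_ofReal hint hnonneg, integral_rpow_mul_exp_neg_mul_Ioi hp hb,
    one_div, inv_rpow hb.le, rpow_neg hb.le]

lemma integral_Ioi_exp_neg_mul_sq_le {c a : ℝ} (hc : 0 < c) (ha : 0 ≤ a) :
    ∫ x in Ioi a, exp (-c * x ^ 2) ≤ exp (-c * a ^ 2) * (√(π / c) / 2) := by
  have hshift : ∫ x in Ioi a, exp (-c * (x - a) ^ 2) = √(π / c) / 2 := by
    have := (measurePreserving_sub_right volume a).setIntegral_preimage_emb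
      (measurableEmbedding_subRight a) (fun y ↦ exp (-c * y ^ 2)) (Ioi 0)
    rwa [preimage_sub_const_Ioi, zero_add, integral_gaussian_Ioi] at this
  have hgauss := integrable_exp_neg_mul_sq hc
  calc ∫ x in Ioi a, exp (-c * x ^ 2)
      ≤ ∫ x in Ioi a, exp (-c * a ^ 2) * exp (-c * (x - a) ^ 2) := by
        refine setIntegral_mono_on hgauss.integrableOn
          ((hgauss.comp_sub_right a).const_mul _).integrableOn measurableSet_Ioi fun x hx ↦ ?_
        rw [← exp_add, exp_le_exp]
        nlinarith [mul_nonneg (mul_nonneg hc.le ha) (sub_nonneg.2 (le_of_lt hx))]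
    _ = exp (-c * a ^ 2) * (√(π / c) / 2) := by rw [integral_const_mul, hshift]

lemma lintegral_Ioi_rpow_mul_exp_neg_one_add_sq_div_le {ν s a t : ℝ} (hν : 0 < ν) (ha : 0 ≤ a)
    (ht : 0 < t) :
    ∫⁻ x in Ioi a, ENNReal.ofReal (t ^ (s - 1) * exp (-((1 + x ^ 2 / ν) * t))) ≤
      ENNReal.ofReal (√(π * ν) / 2 * (t ^ (s - 1 / 2 - 1) * exp (-((1 + a ^ 2 / ν) * t)))) := by
  have hfac : 0 ≤ t ^ (s - 1) * exp (-t) := mul_nonneg (rpow_nonneg ht.le _) (exp_pos _).le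
  have hsplit : ∀ x : ℝ, t ^ (s - 1) * exp (-((1 + x ^ 2 / ν) * t)) =
      t ^ (s - 1) * exp (-t) * exp (-(t / ν) * x ^ 2) := fun x ↦ by
    rw [mul_assoc, ← exp_add]; ring_nf
  have hgauss : ∫⁻ x in Ioi a, ENNReal.ofReal (exp (-(t / ν) * x ^ 2)) ≤
      ENNReal.ofReal (exp (-(t / ν) * a ^ 2) * (√(π / (t / ν)) / 2)) := by
    rw [← ofReal_integral_eq_lintegral_ofReal
      (integrable_exp_neg_mul_sq (by positivity)).integrableOn
      (Filter.Eventually.of_forall fun _ ↦ (exp_pos _).le)]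
    exact ENNReal.ofReal_le_ofReal (integral_Ioi_exp_neg_mul_sq_le (by positivity) ha)
  have hsimp : t ^ (s - 1) * exp (-t) * (exp (-(t / ν) * a ^ 2) * (√(π / (t / ν)) / 2)) =
      √(π * ν) / 2 * (t ^ (s - 1 / 2 - 1) * exp (-((1 + a ^ 2 / ν) * t))) := by
    have hsqrt : √(π / (t / ν)) = √(π * ν) / √t := by
      rw [div_div_eq_mul_div, sqrt_div (by positivity)]
    have hpow : t ^ (s - 1) = t ^ (s - 1 / 2 - 1) * √t := by
      rw [sqrt_eq_rpow, ← rpow_add ht]; ring_nf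
    have hexp : exp (-((1 + a ^ 2 / ν) * t)) = exp (-t) * exp (-(t / ν) * a ^ 2) := by
      rw [← exp_add]; ring_nf
    rw [hsqrt, hpow, hexp]
    field_simp
  simp_rw [hsplit, ENNReal.ofReal_mul hfac]
  rw [lintegral_const_mul' _ _ ENNReal.ofReal_ne_top, ← hsimp, ENNReal.ofReal_mul hfac]
  gcongr

theorem integral_Ioi_one_add_sq_div_rpow_neg_le {ν s a : ℝ} (hν : 0 < ν) (hs : 1 / 2 < s)
    (ha : 0 ≤ a) :
    ∫ x in Ioi a, (1 + x ^ 2 / ν) ^ (-s) ≤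
      √(π * ν) / 2 * (Gamma (s - 1 / 2) / Gamma s) * (1 + a ^ 2 / ν) ^ (-(s - 1 / 2)) := by
  have hb : ∀ x : ℝ, 0 < 1 + x ^ 2 / ν := fun x ↦ by positivity
  have hs0 : 0 < s := by linarith
  have hΓ : 0 < Gamma s := Gamma_pos_of_pos hs0
  have hmixture : ∀ x : ℝ, ENNReal.ofReal ((1 + x ^ 2 / ν) ^ (-s)) = ENNReal.ofReal (Gamma s)⁻¹ *
      ∫⁻ t in Ioi (0 : ℝ), ENNReal.ofReal (t ^ (s - 1) * exp (-((1 + x ^ 2 / ν) * t))) := fun x ↦ by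
    rw [lintegral_Ioi_rpow_mul_exp_neg_mul hs0 (hb x), ← ENNReal.ofReal_mul (by positivity),
      mul_left_comm, inv_mul_cancel₀ hΓ.ne', mul_one]
  have hlint : ∫⁻ x in Ioi a, ENNReal.ofReal ((1 + x ^ 2 / ν) ^ (-s)) ≤ ENNReal.ofReal
      ((Gamma s)⁻¹ * (√(π * ν) / 2 * ((1 + a ^ 2 / ν) ^ (-(s - 1 / 2)) * Gamma (s - 1 / 2)))) :=
    calc ∫⁻ x in Ioi a, ENNReal.ofReal ((1 + x ^ 2 / ν) ^ (-s))
        = ENNReal.ofReal (Gamma s)⁻¹ * ∫⁻ t in Ioi (0 : ℝ), ∫⁻ x in Ioi a,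
            ENNReal.ofReal (t ^ (s - 1) * exp (-((1 + x ^ 2 / ν) * t))) := by
          simp_rw [hmixture]
          rw [lintegral_const_mul' _ _ ENNReal.ofReal_ne_top,
            lintegral_lintegral_swap (by fun_prop)]
      _ ≤ ENNReal.ofReal (Gamma s)⁻¹ * ∫⁻ t in Ioi (0 : ℝ), ENNReal.ofReal
            (√(π * ν) / 2 * (t ^ (s - 1 / 2 - 1) * exp (-((1 + a ^ 2 / ν) * t)))) :=
          mul_le_mul_right (setLIntegral_mono (by fun_prop) fun t ht ↦
            lintegral_Ioi_rpow_mul_exp_neg_one_add_sq_div_le hν ha ht) _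
      _ = _ := by
          simp_rw [ENNReal.ofReal_mul (by positivity : 0 ≤ √(π * ν) / 2)]
          rw [lintegral_const_mul' _ _ ENNReal.ofReal_ne_top,
            lintegral_Ioi_rpow_mul_exp_neg_mul (by linarith) (hb a),
            ← ENNReal.ofReal_mul (by positivity), ← ENNReal.ofReal_mul (by positivity)]
  rw [integral_eq_lintegral_of_nonneg_ae
    (Filter.Eventually.of_forall fun x ↦ rpow_nonneg (hb x).le _)
    (Measurable.aestronglyMeasurable (by fun_prop))]
  convert ENNReal.toReal_le_of_le_ofReal (by positivity) hlint using 1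
  ring

lemma one_le_log_three : 1 ≤ log 3 := by
  rw [le_log_iff_exp_le (by norm_num)]
  linarith [exp_one_lt_d9]

lemma half_le_log_one_add {u : ℝ} (hu₀ : 0 ≤ u) (hu₂ : u ≤ 2) : u / 2 ≤ log (1 + u) := by
  have hconc := strictConcaveOn_log_Ioi.concaveOn.2 (mem_Ioi.2 one_pos)
    (mem_Ioi.2 (by norm_num : (0 : ℝ) < 3)) (by linarith : 0 ≤ 1 - u / 2)
    (by linarith : 0 ≤ u / 2) (by ring)
  simp only [smul_eq_mul, log_one, mul_zero, zero_add] at hconc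
  calc u / 2 ≤ u / 2 * log 3 := le_mul_of_one_le_right (by linarith) one_le_log_three
    _ ≤ log (1 + u) := by rwa [show (1 - u / 2) * 1 + u / 2 * 3 = 1 + u by ring] at hconc

lemma half_mul_one_add_sq_div_rpow_le_exp {ν a : ℝ} (hν : 0 < ν) (ha : a ^ 2 ≤ 2 * (ν + 1.22)) :
    1 / 2 * (1 + a ^ 2 / ν) ^ (-(ν / 2)) ≤ exp (-a ^ 2 / 4) := by
  set u := a ^ 2 / ν with hu
  have hu₀ : 0 ≤ u := by positivity
  have hau : a ^ 2 = ν * u := by rw [hu]; field_simp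
  have hlog2 : 0.6931471803 < log 2 := log_two_gt_d9
  have hhalf : (1 : ℝ) / 2 = exp (-log 2) := by rw [exp_neg, exp_log two_pos, one_div]
  rw [rpow_def_of_pos (by linarith), hhalf, ← exp_add, exp_le_exp, hau]
  rw [hau] at ha
  rcases le_or_gt u 2 with hu₂ | hu₂
  · nlinarith [mul_le_mul_of_nonneg_left (half_le_log_one_add hu₀ hu₂) hν.le]
  · have hlog : 1 ≤ log (1 + u) :=
      one_le_log_three.trans (log_le_log (by norm_num) (by linarith))
    nlinarith [mul_le_mul_of_nonneg_left hlog hν.le]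

theorem student_t_tail_le_exp (ν a : ℝ) (hν : 0 < ν)
    (ha : 0 ≤ a) (ha' : a ≤ Real.sqrt (2 * (ν + 1.22)))
    (C : ℝ) (hC : C = Real.Gamma ((ν + 1) / 2) / (Real.sqrt (ν * Real.pi) * Real.Gamma (ν / 2))) :
    C * ∫ x in Set.Ioi a, (1 + x ^ 2 / ν) ^ (-(ν + 1) / 2) ≤
      Real.exp (-a ^ 2 / 4) := by
  have hΓ : 0 < Gamma ((ν + 1) / 2) := Gamma_pos_of_pos (by positivity)
  have hΓ' : 0 < Gamma (ν / 2) := Gamma_pos_of_pos (by positivity)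
  have hC₀ : 0 ≤ C := hC ▸ by positivity
  have hhalf : (ν + 1) / 2 - 1 / 2 = ν / 2 := by ring
  have htail := integral_Ioi_one_add_sq_div_rpow_neg_le (s := (ν + 1) / 2) hν (by linarith) ha
  rw [hhalf] at htail
  calc C * ∫ x in Ioi a, (1 + x ^ 2 / ν) ^ (-(ν + 1) / 2)
      ≤ C * (√(π * ν) / 2 * (Gamma (ν / 2) / Gamma ((ν + 1) / 2)) *
          (1 + a ^ 2 / ν) ^ (-(ν / 2))) := by
        rw [neg_div]
        exact mul_le_mul_of_nonneg_left htail hC₀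
    _ = 1 / 2 * (1 + a ^ 2 / ν) ^ (-(ν / 2)) := by
        rw [hC, mul_comm ν π]
        field_simp
    _ ≤ exp (-a ^ 2 / 4) :=
        half_mul_one_add_sq_div_rpow_le_exp hν ((le_sqrt ha (by positivity)).1 ha')
end

section
/- Let ν > 0 and let X be a Student's t random variable with ν degrees of freedom, i.e. P[X ≥ a] = C_ν ∫_a^∞ (1 + x²/ν)^{−(ν+1)/2} dx with C_ν = Γ((ν+1)/2)/(√(νπ) Γ(ν/2)). Then for every a ≥ 0, with K = 0.543, one has P[X ≥ a] ≤ e^{log K − a²ν/(a² + 2ν)}. -/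
/-!
For `x = a + t` with `t ≥ 0` one has `1 + x²/ν ≥ (1 + a²/ν) (1 + t²/(ν + a²))`. Hence the tail
is at most `(1 + a²/ν)^(-(ν+1)/2)` times a rescaled half-line integral of the unnormalised
density, which the Beta integral `B(1/2, ν/2)` evaluates: `C_ν` times the tail is at most
`(1/2) (1 + a²/ν)^(-ν/2)`. The inequality `log (1 + y) ≥ 2y/(y + 2)` turns this into
`(1/2) exp (-a²ν/(a² + 2ν))`, and `1/2 ≤ K`.
-/

open Real MeasureTheory Set

theorem setIntegral_Ioi_eq_comp_add {E : Type*} [NormedAddCommGroup E] [NormedSpace ℝ E]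
    (f : ℝ → E) (a : ℝ) : ∫ x in Ioi a, f x = ∫ t in Ioi 0, f (t + a) := by
  have := (measurePreserving_add_right volume a).setIntegral_preimage_emb
    (measurableEmbedding_addRight a) f (Ioi a)
  rw [← this, preimage_add_const_Ioi, sub_self]

theorem integral_Ioi_one_add_sq_div_rpow {w : ℝ} (hw : 0 < w) (s : ℝ) :
    ∫ t in Ioi (0 : ℝ), (1 + t ^ 2 / w) ^ s = √w * ∫ u in Ioi (0 : ℝ), (1 + u ^ 2) ^ s := by
  have hsw : 0 < √w := sqrt_pos.2 hw
  have h := integral_comp_mul_left_Ioi (fun u : ℝ ↦ (1 + u ^ 2) ^ s) 0 (inv_pos.2 hsw)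
  rw [mul_zero, inv_inv, smul_eq_mul] at h
  rw [← h]
  refine setIntegral_congr_fun measurableSet_Ioi fun t _ ↦ ?_
  rw [mul_pow, inv_pow, sq_sqrt hw.le, inv_mul_eq_div]

theorem integrable_one_add_sq_div_rpow_neg {w p : ℝ} (hw : 0 < w) (hp : 1 / 2 < p) :
    Integrable fun t : ℝ ↦ (1 + t ^ 2 / w) ^ (-p) := by
  have h := (integrable_rpow_neg_one_add_norm_sq (E := ℝ) (μ := volume) (r := 2 * p)
    (by rw [Module.finrank_self, Nat.cast_one]; linarith)).comp_div (sqrt_pos.2 hw).ne'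
  refine h.congr (ae_of_all _ fun t ↦ ?_)
  simp only [Real.norm_eq_abs, sq_abs, div_pow, sq_sqrt hw.le]
  ring_nf

theorem integral_Ioo_rpow_mul_one_sub_rpow {α β : ℝ} (hα : 0 < α) (hβ : 0 < β) :
    ∫ x in Ioo (0 : ℝ) 1, x ^ (α - 1) * (1 - x) ^ (β - 1) =
      Gamma α * Gamma β / Gamma (α + β) := by
  have h := Complex.betaIntegral_eq_Gamma_mul_div α β (by simpa) (by simpa)
  rw [Complex.betaIntegral, intervalIntegral.integral_of_le zero_le_one,
    integral_Ioc_eq_integral_Ioo] at h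
  apply Complex.ofReal_injective
  push_cast [← Complex.Gamma_ofReal]
  rw [← h, ← integral_complex_ofReal]
  refine setIntegral_congr_fun measurableSet_Ioo fun x ⟨hx0, hx1⟩ ↦ ?_
  push_cast [Complex.ofReal_cpow hx0.le, Complex.ofReal_cpow (sub_nonneg.2 hx1.le)]
  rfl

theorem integral_Ioo_rpow_mul_one_sub_rpow_eq_two_mul (q : ℝ) :
    ∫ x in Ioo (0 : ℝ) 1, x ^ ((1 : ℝ) / 2 - 1) * (1 - x) ^ (q - 1) =
      2 * ∫ u in Ioi (0 : ℝ), (1 + u ^ 2) ^ (-(q + 1 / 2)) := by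
  set φ : ℝ → ℝ := fun u ↦ u ^ 2 / (1 + u ^ 2)
  have hφ_deriv (u : ℝ) : HasDerivAt φ (2 * u / (1 + u ^ 2) ^ 2) u := by
    refine ((hasDerivAt_pow 2 u).div ((hasDerivAt_pow 2 u).const_add 1)
      (by positivity)).congr_deriv ?_
    push_cast
    ring
  have hφ_mono : StrictMonoOn φ (Ioi 0) := fun u hu v hv huv ↦ by
    have hu : 0 < u := hu
    simp only [φ]
    rw [div_lt_div_iff₀ (by positivity) (by positivity)]
    nlinarith
  have hφ_image : φ '' Ioi 0 = Ioo 0 1 := by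
    ext y
    constructor
    · rintro ⟨u, hu, rfl⟩
      have hu : 0 < u := hu
      exact ⟨by positivity, (div_lt_one (by positivity)).2 (by linarith)⟩
    · rintro ⟨hy0, hy1⟩
      have hy : 0 < y / (1 - y) := div_pos hy0 (by linarith)
      refine ⟨√(y / (1 - y)), sqrt_pos.2 hy, ?_⟩
      have : 1 - y ≠ 0 := by linarith
      simp only [φ, sq_sqrt hy.le]
      field_simp
      ring
  rw [← hφ_image, integral_image_eq_integral_abs_deriv_smul measurableSet_Ioi
    (fun u _ ↦ (hφ_deriv u).hasDerivWithinAt) hφ_mono.injOn, ← integral_const_mul]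
  refine setIntegral_congr_fun measurableSet_Ioi fun u (hu : 0 < u) ↦ ?_
  set s := 1 + u ^ 2
  have hs : 0 < s := by positivity
  have h_base : (u ^ 2 / s) ^ ((1 : ℝ) / 2 - 1) = u⁻¹ * s ^ ((1 : ℝ) / 2) := by
    rw [div_rpow (by positivity) hs.le, ← rpow_natCast, ← rpow_mul hu.le]
    norm_num [rpow_neg_one, rpow_neg hs.le]
  have h_compl : (1 - u ^ 2 / s) ^ (q - 1) = s ^ (-(q - 1)) := by
    rw [show 1 - u ^ 2 / s = s⁻¹ by field_simp; ring, inv_rpow hs.le, rpow_neg hs.le]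
  have h_exp : s ^ (-(q + 1 / 2)) = s ^ ((1 : ℝ) / 2) * s ^ (-(q - 1)) * (s ^ 2)⁻¹ := by
    rw [← rpow_add hs, ← rpow_natCast, ← rpow_neg hs.le, ← rpow_add hs]
    push_cast
    ring_nf
  show |2 * u / s ^ 2| • ((u ^ 2 / s) ^ ((1 : ℝ) / 2 - 1) * (1 - u ^ 2 / s) ^ (q - 1)) =
    2 * s ^ (-(q + 1 / 2))
  rw [smul_eq_mul, abs_of_pos (by positivity), h_base, h_compl, h_exp]
  field_simp

theorem integral_Ioi_one_add_sq_rpow_neg {q : ℝ} (hq : 0 < q) :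
    ∫ u in Ioi (0 : ℝ), (1 + u ^ 2) ^ (-(q + 1 / 2)) = √π * Gamma q / (2 * Gamma (q + 1 / 2)) := by
  have h := integral_Ioo_rpow_mul_one_sub_rpow (α := 1 / 2) one_half_pos hq
  rw [integral_Ioo_rpow_mul_one_sub_rpow_eq_two_mul, Gamma_one_half_eq,
    show 1 / 2 + q = q + 1 / 2 by ring] at h
  rw [mul_comm 2, ← div_div, ← h]
  ring

theorem one_add_sq_div_mul_one_add_sq_div_le {ν a t : ℝ} (hν : 0 < ν) (ha : 0 ≤ a) (ht : 0 ≤ t) :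
    (1 + a ^ 2 / ν) * (1 + t ^ 2 / (ν + a ^ 2)) ≤ 1 + (t + a) ^ 2 / ν := by
  have : 0 < ν + a ^ 2 := by positivity
  rw [← sub_nonneg]
  field_simp
  nlinarith [mul_nonneg ht ha]

theorem setIntegral_Ioi_one_add_sq_div_rpow_neg_le {ν a p : ℝ} (hν : 0 < ν) (ha : 0 ≤ a)
    (hp : 1 / 2 < p) :
    ∫ x in Ioi a, (1 + x ^ 2 / ν) ^ (-p) ≤
      (1 + a ^ 2 / ν) ^ (-p) * ∫ t in Ioi (0 : ℝ), (1 + t ^ 2 / (ν + a ^ 2)) ^ (-p) := by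
  rw [setIntegral_Ioi_eq_comp_add, ← integral_const_mul]
  have hw : 0 < ν + a ^ 2 := by positivity
  refine integral_mono_of_nonneg (ae_of_all _ fun t ↦ by positivity)
    ((integrable_one_add_sq_div_rpow_neg hw hp).const_mul _).integrableOn
    (ae_restrict_of_forall_mem measurableSet_Ioi fun t (ht : 0 < t) ↦ ?_)
  dsimp only
  rw [← mul_rpow (by positivity) (by positivity)]
  exact rpow_le_rpow_of_nonpos (by positivity)
    (one_add_sq_div_mul_one_add_sq_div_le hν ha ht.le) (by linarith)

theorem studentT_tail_le_half_rpow {ν a : ℝ} (hν : 0 < ν) (ha : 0 ≤ a) :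
    Gamma ((ν + 1) / 2) / (√(ν * π) * Gamma (ν / 2)) *
        ∫ x in Ioi a, (1 + x ^ 2 / ν) ^ (-(ν + 1) / 2) ≤
      1 / 2 * (1 + a ^ 2 / ν) ^ (-(ν / 2)) := by
  have hB : 0 < 1 + a ^ 2 / ν := by positivity
  have hsqrt : √(ν + a ^ 2) = √ν * (1 + a ^ 2 / ν) ^ (1 / 2 : ℝ) := by
    rw [← sqrt_eq_rpow, ← sqrt_mul hν.le]
    field_simp
  have hpow : (1 + a ^ 2 / ν) ^ (-(ν / 2 + 1 / 2)) * (1 + a ^ 2 / ν) ^ (1 / 2 : ℝ) =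
      (1 + a ^ 2 / ν) ^ (-(ν / 2)) := by
    rw [← rpow_add hB]
    ring_nf
  rw [neg_div, show (ν + 1) / 2 = ν / 2 + 1 / 2 by ring]
  calc _ ≤ Gamma (ν / 2 + 1 / 2) / (√(ν * π) * Gamma (ν / 2)) *
        ((1 + a ^ 2 / ν) ^ (-(ν / 2 + 1 / 2)) *
          ∫ t in Ioi (0 : ℝ), (1 + t ^ 2 / (ν + a ^ 2)) ^ (-(ν / 2 + 1 / 2))) := by
        gcongr
        exact setIntegral_Ioi_one_add_sq_div_rpow_neg_le hν ha (by linarith)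
    _ = 1 / 2 * (1 + a ^ 2 / ν) ^ (-(ν / 2)) := by
        rw [integral_Ioi_one_add_sq_div_rpow (by positivity),
          integral_Ioi_one_add_sq_rpow_neg (by positivity), hsqrt, sqrt_mul hν.le, ← hpow]
        field_simp

theorem one_add_rpow_neg_le_exp {y s : ℝ} (hy : 0 ≤ y) (hs : 0 ≤ s) :
    (1 + y) ^ (-s) ≤ exp (-(s * (2 * y / (y + 2)))) := by
  rw [rpow_def_of_pos (by linarith), exp_le_exp]
  nlinarith [mul_le_mul_of_nonneg_left (le_log_one_add_of_nonneg hy) hs]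

theorem student_t_tail_le_exp_log_k (ν a : ℝ) (hν : 0 < ν) (ha : 0 ≤ a)
    (C : ℝ) (hC : C = Real.Gamma ((ν + 1) / 2) / (Real.sqrt (ν * Real.pi) * Real.Gamma (ν / 2)))
    (K : ℝ) (hK : K = 0.543) :
    C * ∫ x in Set.Ioi a, (1 + x ^ 2 / ν) ^ (-(ν + 1) / 2) ≤
      Real.exp (Real.log K - a ^ 2 * ν / (a ^ 2 + 2 * ν)) := by
  subst hC hK
  calc _ ≤ 1 / 2 * (1 + a ^ 2 / ν) ^ (-(ν / 2)) := studentT_tail_le_half_rpow hν ha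
    _ ≤ 1 / 2 * exp (-(ν / 2 * (2 * (a ^ 2 / ν) / (a ^ 2 / ν + 2)))) := by
        gcongr
        exact one_add_rpow_neg_le_exp (by positivity) (by positivity)
    _ = 1 / 2 * exp (-(a ^ 2 * ν / (a ^ 2 + 2 * ν))) := by
        congr 3
        field_simp
    _ ≤ 0.543 * exp (-(a ^ 2 * ν / (a ^ 2 + 2 * ν))) := by
        gcongr
        norm_num
    _ = exp (log 0.543 - a ^ 2 * ν / (a ^ 2 + 2 * ν)) := by
        rw [sub_eq_add_neg, exp_add, exp_log (by norm_num)]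
end
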